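/- If f : X → Y is a surjective θ-continuous map and X is θ-Hurewicz, then Y is θ-Hurewicz. -/

import Mathlib

/-!
Pull each θ-open cover of `Y` back along `f`: by θ-continuity the preimages are θ-open, so the
θ-Hurewicz property of `X` selects finitely many of them at each stage. Each selected preimage
comes from a member of the original cover, and surjectivity turns "every point of `X` is
eventually covered" into the same statement for `Y`.
-/

open Filter Topology Set

def AlphaOpen {X : Type*} [TopologicalSpace X] (A : Set X) : Prop :=
  A ⊆ interior (closure (interior A))

def ThetaOpen {X : Type*} [TopologicalSpace X] (A : Set X) : Prop :=
  ∀ x ∈ A, ∃ B : Set X, IsOpen B ∧ x ∈ B ∧ closure B ⊆ A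

def SemiOpen {X : Type*} [TopologicalSpace X] (A : Set X) : Prop :=
  A ⊆ closure (interior A)

/-- Generic Hurewicz-type selection principle for covers by sets satisfying `P`. -/
def HurewiczFor (X : Type*) [TopologicalSpace X] (P : Set X → Prop) : Prop :=
  ∀ 𝒜 : ℕ → Set (Set X),
    (∀ k, (∀ U ∈ 𝒜 k, P U) ∧ ⋃₀ 𝒜 k = Set.univ) →
    ∃ ℬ : ℕ → Set (Set X),
      (∀ k, ℬ k ⊆ 𝒜 k ∧ (ℬ k).Finite) ∧
      ∀ x : X, ∀ᶠ k in Filter.atTop, x ∈ ⋃₀ ℬ k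

def Hurewicz (X : Type*) [TopologicalSpace X] : Prop := HurewiczFor X IsOpen
def AlphaHurewicz (X : Type*) [TopologicalSpace X] : Prop := HurewiczFor X AlphaOpen
def ThetaHurewicz (X : Type*) [TopologicalSpace X] : Prop := HurewiczFor X ThetaOpen
def MildlyHurewicz (X : Type*) [TopologicalSpace X] : Prop := HurewiczFor X IsClopen
def SemiHurewicz (X : Type*) [TopologicalSpace X] : Prop := HurewiczFor X SemiOpen

def ThetaContinuous {X Y : Type*} [TopologicalSpace X] [TopologicalSpace Y] (f : X → Y) : Prop :=
  ∀ (x : X) (B : Set Y), IsOpen B → f x ∈ B →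
    ∃ A : Set X, IsOpen A ∧ x ∈ A ∧ f '' closure A ⊆ closure B

theorem ThetaOpen.preimage {X Y : Type*} [TopologicalSpace X] [TopologicalSpace Y] {f : X → Y}
    (hf : ThetaContinuous f) {U : Set Y} (hU : ThetaOpen U) : ThetaOpen (f ⁻¹' U) := by
  intro x hx
  obtain ⟨B, hB, hxB, hBU⟩ := hU (f x) hx
  obtain ⟨A, hA, hxA, hAB⟩ := hf x B hB hxB
  exact ⟨A, hA, hxA, image_subset_iff.mp (hAB.trans hBU)⟩

theorem Set.sUnion_image_preimage {X Y : Type*} (f : X → Y) (S : Set (Set Y)) :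
    ⋃₀ (preimage f '' S) = f ⁻¹' ⋃₀ S := by
  rw [sUnion_image, preimage_sUnion]

theorem HurewiczFor.of_surjective {X Y : Type*} [TopologicalSpace X] [TopologicalSpace Y]
    {P : Set X → Prop} {Q : Set Y → Prop} (h : HurewiczFor X P) {f : X → Y}
    (hf : Function.Surjective f) (hPQ : ∀ U, Q U → P (f ⁻¹' U)) : HurewiczFor Y Q := by
  intro 𝒜 h𝒜
  have hcover : ∀ k, (∀ V ∈ preimage f '' 𝒜 k, P V) ∧ ⋃₀ (preimage f '' 𝒜 k) = univ := by
    refine fun k => ⟨?_, ?_⟩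
    · rintro _ ⟨U, hU, rfl⟩
      exact hPQ U ((h𝒜 k).1 U hU)
    · rw [sUnion_image_preimage, (h𝒜 k).2, preimage_univ]
  obtain ⟨ℬ, hℬ, hℬx⟩ := h _ hcover
  have hlift : ∀ k, ∃ 𝒞 ⊆ 𝒜 k, 𝒞.Finite ∧ ℬ k = preimage f '' 𝒞 := fun k =>
    exists_subset_image_finite_and.mp ⟨ℬ k, (hℬ k).1, (hℬ k).2, rfl⟩
  choose 𝒞 h𝒞𝒜 h𝒞fin h𝒞ℬ using hlift
  refine ⟨𝒞, fun k => ⟨h𝒞𝒜 k, h𝒞fin k⟩, fun y => ?_⟩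
  obtain ⟨x, rfl⟩ := hf y
  filter_upwards [hℬx x] with k hk
  rwa [h𝒞ℬ, sUnion_image_preimage, mem_preimage] at hk

theorem thetaContinuous_image_thetaHurewicz {X Y : Type*} [TopologicalSpace X]
    [TopologicalSpace Y] (f : X → Y) (hf : Function.Surjective f)
    (hc : ∀ (x : X) (B : Set Y), IsOpen B → f x ∈ B →
      ∃ A : Set X, IsOpen A ∧ x ∈ A ∧ f '' closure A ⊆ closure B)
    (h : ThetaHurewicz X) : ThetaHurewicz Y :=
  HurewiczFor.of_surjective h hf fun _ => ThetaOpen.preimage hc
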